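/- Let k ≥ 1, let α₁, …, α_k be nonnegative reals with Σ_{i=1}^k α_i = 1, let μ₁, …, μ_k ∈ ℝ^d, and let Σ₁, …, Σ_k be d×d positive semidefinite matrices. Define the mixture mean μ = Σ_{i=1}^k α_i μ_i and the mixture covariance Σ = Σ_{i=1}^k α_i·(Σ_i + (μ_i − μ)(μ_i − μ)ᵀ) (this is the covariance matrix of the Gaussian mixture Σ_i α_i N(μ_i, Σ_i)). Then for every p ∈ {1,…,k}: α_p·Σ_p ⪯ Σ. Consequently, if Σ is positive definite and α_p > 0, then ‖Σ^{-1/2} Σ_p Σ^{-1/2}‖_op ≤ 1/α_p. -/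

import Mathlib

/-!
Every summand `α_i (Σ_i + (μ_i - μ)(μ_i - μ)ᵀ)` of `Σ` is positive semidefinite, so `Σ` dominates
the `p`-th summand, which dominates `α_p Σ_p`. Conjugation by `Σ^{-1/2}` preserves the Loewner order
and sends `Σ` to `1`, so `0 ⪯ Σ^{-1/2} Σ_p Σ^{-1/2} ⪯ α_p⁻¹ 1`; for such a matrix every Rayleigh
quotient lies in `[0, α_p⁻¹]`, and for a symmetric operator the norm is the supremum of the
absolute Rayleigh quotients.
-/

open Matrix MeasureTheory ProbabilityTheory

noncomputable section

namespace ListDecCov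

/-- The positive semidefinite square root of a positive semidefinite matrix
(the former Mathlib definition `Matrix.PosSemidef.sqrt`, removed since). -/
def psdSqrt {n : Type*} [Fintype n] [DecidableEq n]
    {A : Matrix n n ℝ} (hA : A.PosSemidef) : Matrix n n ℝ :=
  hA.1.eigenvectorUnitary.1 * diagonal ((↑) ∘ Real.sqrt ∘ hA.1.eigenvalues) *
    (star hA.1.eigenvectorUnitary : Matrix n n ℝ)

/-- Frobenius norm of a square real matrix. -/
def frobNorm {d : ℕ} (M : Matrix (Fin d) (Fin d) ℝ) : ℝ :=
  Real.sqrt (∑ i, ∑ j, (M i j) ^ 2)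

/-- Operator (spectral) norm of a square real matrix. -/
def opNorm {d : ℕ} (M : Matrix (Fin d) (Fin d) ℝ) : ℝ :=
  ‖Matrix.toEuclideanCLM (𝕜 := ℝ) M‖

/-- Euclidean (ℓ²) norm of a vector. -/
def vecNorm {d : ℕ} (v : Fin d → ℝ) : ℝ :=
  Real.sqrt (∑ i, (v i) ^ 2)

/-- The four Penrose equations characterizing the Moore–Penrose pseudoinverse. -/
def IsMoorePenrose {d : ℕ} (H Hd : Matrix (Fin d) (Fin d) ℝ) : Prop :=
  H * Hd * H = H ∧ Hd * H * Hd = Hd ∧ (H * Hd)ᵀ = H * Hd ∧ (Hd * H)ᵀ = Hd * H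

/-- Average of `f` over a finite set. -/
def fAvg {X V : Type*} [AddCommMonoid V] [Module ℝ V] (A : Finset X) (f : X → V) : V :=
  (A.card : ℝ)⁻¹ • ∑ x ∈ A, f x

/-- Average of `f` over a multiset. -/
def msAvg {X V : Type*} [AddCommMonoid V] [Module ℝ V] (T : Multiset X) (f : X → V) : V :=
  (T.card : ℝ)⁻¹ • (T.map f).sum

/-- Empirical covariance matrix of `f x`, `x` ranging over a finite set. -/
def fCov {X : Type*} {d : ℕ} (A : Finset X) (f : X → (Fin d → ℝ)) :
    Matrix (Fin d) (Fin d) ℝ :=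
  fAvg A (fun x => Matrix.vecMulVec (f x) (f x)) - Matrix.vecMulVec (fAvg A f) (fAvg A f)

/-- Empirical covariance matrix of `f x`, `x` ranging over a multiset. -/
def msCov {X : Type*} {d : ℕ} (T : Multiset X) (f : X → (Fin d → ℝ)) :
    Matrix (Fin d) (Fin d) ℝ :=
  msAvg T (fun x => Matrix.vecMulVec (f x) (f x)) - Matrix.vecMulVec (msAvg T f) (msAvg T f)

/-- Empirical variance of `g x`, `x` ranging over a finite set. -/
def fVar {X : Type*} (A : Finset X) (g : X → ℝ) : ℝ :=
  fAvg A fun x => (g x - fAvg A g) ^ 2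

/-- Empirical variance of `g x`, `x` ranging over a multiset. -/
def msVar {X : Type*} (T : Multiset X) (g : X → ℝ) : ℝ :=
  msAvg T fun x => (g x - msAvg T g) ^ 2

/-- The `k`-th smallest element (1-indexed) of a multiset of reals. -/
def kthSmallest (s : Multiset ℝ) (k : ℕ) : ℝ :=
  (s.sort (· ≤ ·)).getD (k - 1) 0

/-- Median (the `⌈m/2⌉`-th smallest element) of a multiset of reals of size `m`. -/
def msMedian (s : Multiset ℝ) : ℝ :=
  kthSmallest s ((Multiset.card s + 1) / 2)

/-- Conditions (L.1)–(L.2) of stability, with respect to mean `μ`, covariance `Sig`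
(with psd square root `sqrtSig`) and parameter `ε`. -/
def SatisfiesL12 {d : ℕ} (μ : Fin d → ℝ) (Sig sqrtSig : Matrix (Fin d) (Fin d) ℝ) (ε : ℝ)
    (A : Finset (Fin d → ℝ)) : Prop :=
  ∀ A' ⊆ A, (1 - ε) * (A.card : ℝ) ≤ (A'.card : ℝ) →
    (∀ v : Fin d → ℝ,
        |fAvg A' (fun x => v ⬝ᵥ (x - μ))| ≤ 0.1 * Real.sqrt (v ⬝ᵥ Sig.mulVec v)) ∧
    (∀ U : Matrix (Fin d) (Fin d) ℝ, U.IsSymm →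
        |Matrix.trace ((fAvg A' (fun x => Matrix.vecMulVec (x - μ) (x - μ)) - Sig) * U)|
          ≤ 0.1 * frobNorm (sqrtSig * U * sqrtSig))

end ListDecCov

namespace ListDecCov

open scoped MatrixOrder

theorem psdSqrt_eq_cfcSqrt {n : Type*} [Fintype n] [DecidableEq n] {A : Matrix n n ℝ}
    (hA : A.PosSemidef) : psdSqrt hA = CFC.sqrt A := by
  rw [CFC.sqrt_eq_real_sqrt A hA.nonneg, cfcₙ_eq_cfc, hA.1.cfc_eq, IsHermitian.cfc,
    Unitary.conjStarAlgAut_apply, psdSqrt]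
  rfl

section
open scoped ComplexOrder
variable {𝕜 n : Type*} [RCLike 𝕜] [Fintype n] [DecidableEq n]

theorem norm_toEuclideanCLM_le_of_le_smul_one {A : Matrix n n 𝕜} {c : ℝ} (hc : 0 ≤ c)
    (hA : 0 ≤ A) (hAc : A ≤ c • 1) : ‖toEuclideanCLM (𝕜 := 𝕜) A‖ ≤ c := by
  have hsymm : (toEuclideanCLM (𝕜 := 𝕜) A : EuclideanSpace 𝕜 n →ₗ[𝕜] _).IsSymmetric :=
    isSymmetric_toEuclideanLin_iff.mpr hA.posSemidef.1
  rw [ContinuousLinearMap.norm_eq_iSup_rayleighQuotient _ hsymm]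
  refine ciSup_le fun x => ?_
  have hlow : 0 ≤ RCLike.re (inner 𝕜 (toEuclideanCLM (𝕜 := 𝕜) A x) x) :=
    (isPositive_toEuclideanLin_iff.mpr hA.posSemidef).re_inner_nonneg_left x
  have hup : RCLike.re (inner 𝕜 (toEuclideanCLM (𝕜 := 𝕜) A x) x) ≤ c * ‖x‖ ^ 2 := by
    have h := (isPositive_toEuclideanLin_iff.mpr (Matrix.le_iff.mp hAc)).re_inner_nonneg_left x
    simp only [LinearMap.sub_apply, map_sub, toLpLin_apply, smul_mulVec, one_mulVec,
      WithLp.toLp_smul, WithLp.toLp_ofLp, inner_sub_left, inner_smul_left_eq_smul,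
      inner_self_eq_norm_sq_to_K, RCLike.smul_re, ← RCLike.ofReal_pow, RCLike.ofReal_re,
      sub_nonneg] at h
    exact h
  rw [ContinuousLinearMap.rayleighQuotient, ContinuousLinearMap.reApplyInnerSelf_apply,
    abs_of_nonneg (div_nonneg hlow (by positivity))]
  exact div_le_of_le_mul₀ (by positivity) hc hup

theorem isSelfAdjoint_inv_cfcSqrt (S : Matrix n n 𝕜) : IsSelfAdjoint (CFC.sqrt S)⁻¹ :=
  (CFC.sqrt_nonneg S).posSemidef.1.inv

theorem inv_cfcSqrt_mul_mul_inv_cfcSqrt_le_smul_one {S C : Matrix n n 𝕜} {c : ℝ}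
    (hS : S.PosDef) (hC : C ≤ c • S) : (CFC.sqrt S)⁻¹ * C * (CFC.sqrt S)⁻¹ ≤ c • 1 := by
  set R := CFC.sqrt S
  have hRR : R * R = S := CFC.sqrt_mul_sqrt_self S hS.posSemidef.nonneg
  have hR : IsUnit R.det :=
    (isUnit_iff_isUnit_det R).mp ((CFC.isUnit_sqrt_iff S hS.posSemidef.nonneg).mpr hS.isUnit)
  calc R⁻¹ * C * R⁻¹ ≤ R⁻¹ * (c • S) * R⁻¹ :=
        (isSelfAdjoint_inv_cfcSqrt S).conjugate_le_conjugate hC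
    _ = c • (R⁻¹ * (R * R) * R⁻¹) := by
        rw [hRR, Matrix.mul_smul, Matrix.smul_mul]
    _ = c • 1 := by
        rw [← Matrix.mul_assoc, nonsing_inv_mul R hR, Matrix.one_mul, mul_nonsing_inv R hR]

end

theorem smul_le_sum_smul_add_vecMulVec {ι n : Type*} [Fintype ι] [Fintype n] {w : ι → ℝ}
    (hw : ∀ i, 0 ≤ w i) {C : ι → Matrix n n ℝ} (hC : ∀ i, 0 ≤ C i) (m : ι → n → ℝ)
    (μ : n → ℝ) (p : ι) :
    w p • C p ≤ ∑ i, w i • (C i + vecMulVec (m i - μ) (m i - μ)) := by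
  have hvv i : 0 ≤ vecMulVec (m i - μ) (m i - μ) := by
    simpa using (posSemidef_vecMulVec_self_star (m i - μ)).nonneg
  calc w p • C p ≤ w p • (C p + vecMulVec (m p - μ) (m p - μ)) :=
        smul_le_smul_of_nonneg_left (le_add_of_nonneg_right (hvv p)) (hw p)
    _ ≤ _ := Finset.single_le_sum (f := fun i => w i • (C i + vecMulVec (m i - μ) (m i - μ)))
        (fun i _ => smul_nonneg (hw i) (add_nonneg (hC i) (hvv i))) (Finset.mem_univ p)

theorem statement19_general (d k : ℕ) (w : Fin k → ℝ)
    (hw0 : ∀ i, 0 ≤ w i)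
    (μs : Fin k → Fin d → ℝ) (Covs : Fin k → Matrix (Fin d) (Fin d) ℝ)
    (hCovs : ∀ i, (Covs i).PosSemidef)
    (μ : Fin d → ℝ)
    (Sig : Matrix (Fin d) (Fin d) ℝ)
    (hSig : Sig = ∑ i, w i • (Covs i + Matrix.vecMulVec (μs i - μ) (μs i - μ)))
    (p : Fin k) :
    (Sig - w p • Covs p).PosSemidef ∧
      ∀ (hpd : Sig.PosDef), 0 < w p →
        opNorm ((psdSqrt hpd.posSemidef)⁻¹ * Covs p * (psdSqrt hpd.posSemidef)⁻¹) ≤ 1 / w p := by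
  have hle : w p • Covs p ≤ Sig :=
    hSig ▸ smul_le_sum_smul_add_vecMulVec hw0 (fun i => (hCovs i).nonneg) μs μ p
  refine ⟨Matrix.le_iff.mp hle, fun hpd hwp => ?_⟩
  have hC : Covs p ≤ (1 / w p) • Sig := calc
    Covs p = (1 / w p) • (w p • Covs p) := by rw [smul_smul, one_div_mul_cancel hwp.ne', one_smul]
    _ ≤ (1 / w p) • Sig := smul_le_smul_of_nonneg_left hle (by positivity)
  rw [opNorm, psdSqrt_eq_cfcSqrt]
  exact norm_toEuclideanCLM_le_of_le_smul_one (by positivity)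
    ((isSelfAdjoint_inv_cfcSqrt Sig).conjugate_nonneg (hCovs p).nonneg)
    (inv_cfcSqrt_mul_mul_inv_cfcSqrt_le_smul_one hpd hC)

/-- for a mixture with weights `w i`, means `μs i`, covariances `Covs i`, the
mixture covariance dominates `w p • Covs p`; consequently, if the mixture covariance `Σ` is
positive definite and `w p > 0`, then `‖Σ^{-1/2} Σ_p Σ^{-1/2}‖_op ≤ 1/w p`. -/
theorem statement19 (d k : ℕ) (hk : 1 ≤ k) (w : Fin k → ℝ)
    (hw0 : ∀ i, 0 ≤ w i) (hw1 : ∑ i, w i = 1)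
    (μs : Fin k → Fin d → ℝ) (Covs : Fin k → Matrix (Fin d) (Fin d) ℝ)
    (hCovs : ∀ i, (Covs i).PosSemidef)
    (μ : Fin d → ℝ) (hμ : μ = ∑ i, w i • μs i)
    (Sig : Matrix (Fin d) (Fin d) ℝ)
    (hSig : Sig = ∑ i, w i • (Covs i + Matrix.vecMulVec (μs i - μ) (μs i - μ)))
    (p : Fin k) :
    (Sig - w p • Covs p).PosSemidef ∧
      ∀ (hpd : Sig.PosDef), 0 < w p →
        opNorm ((psdSqrt hpd.posSemidef)⁻¹ * Covs p * (psdSqrt hpd.posSemidef)⁻¹) ≤ 1 / w p :=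
  statement19_general d k w hw0 μs Covs hCovs μ Sig hSig p

end ListDecCov
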